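/- arXiv:1804.00356 — 2 statements merged into one kernel-verified Lean document; each statement's English description precedes it below -/
import Mathlib

section
/- Combining the two previous statements: for a deterministic threshold decision π = 1{Λ(S) ≥ τ} with finite signal alphabet and strictly positive conditional laws, a local information cascade occurs (I(π; S | W=w) = 0 for both w) if and only if τ ∉ (L_s, U_s]. -/
/-- Mutual information `I(π(S); S)` for a deterministic binary function `π` of a
signal `S` with pmf `μ` on a finite alphabet: the joint pmf of `(π(S), S)` is
`P(x,s) = μ s · 1{π s = x}`, and
`I = Σ_{x,s} P(x,s) · log (P(x,s) / (P(x)·P(s)))` (0·log 0 = 0 convention). -/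
noncomputable def detMI {S : Type*} [Fintype S] (μ : S → ℝ) (π : S → Fin 2) : ℝ :=
  ∑ x : Fin 2, ∑ s : S,
    (if π s = x then
      μ s * Real.log (μ s /
        ((∑ s' ∈ Finset.univ.filter (fun s' => π s' = x), μ s') * μ s))
    else 0)

lemma detMI_const {S : Type*} [Fintype S] (μ : S → ℝ) (hpos : ∀ s, 0 < μ s)
    (hsum : ∑ s, μ s = 1) (π : S → Fin 2) (c : Fin 2) (hc : ∀ s, π s = c) :
    detMI μ π = 0 := by
  unfold detMI
  apply Finset.sum_eq_zero; intro x _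
  apply Finset.sum_eq_zero; intro s _
  by_cases h : π s = x
  · rw [if_pos h]
    have hx : c = x := (hc s) ▸ h
    have hfilter : (Finset.univ.filter (fun s' => π s' = x)) = Finset.univ := by
      ext s'; simp [hc, hx]
    rw [hfilter, hsum, one_mul, div_self (hpos s).ne', Real.log_one, mul_zero]
  · rw [if_neg h]

lemma detMI_pos {S : Type*} [Fintype S] (μ : S → ℝ) (hpos : ∀ s, 0 < μ s)
    (hsum : ∑ s, μ s = 1) (π : S → Fin 2) (s0 s1 : S) (h01 : π s0 ≠ π s1) :
    0 < detMI μ π := by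
  set p : Fin 2 → ℝ := fun x => ∑ s' ∈ Finset.univ.filter (fun s' => π s' = x), μ s' with hp
  have hsump : ∑ x : Fin 2, p x = 1 := by
    rw [hp]
    rw [← Finset.sum_fiberwise (Finset.univ) π μ] at hsum
    exact hsum
  have hppos : ∀ x, 0 < p x := by
    intro x
    have hmem : ∃ s, π s = x := by
      by_cases h : π s0 = x
      · exact ⟨s0, h⟩
      · exact ⟨s1, by omega⟩
    obtain ⟨s, hs⟩ := hmem
    apply Finset.sum_pos' (fun i _ => (hpos i).le)
    exact ⟨s, by simpa using hs, hpos s⟩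
  have hplt : ∀ x, p x < 1 := by
    intro x
    have : p x + p (1 - x) = 1 := by
      fin_cases x <;> simpa [Fin.sum_univ_two, add_comm] using hsump
    have := hppos (1 - x); linarith
  have hform : detMI μ π = ∑ x : Fin 2, (-(p x * Real.log (p x))) := by
    unfold detMI
    apply Finset.sum_congr rfl; intro x _
    have : ∀ s ∈ Finset.univ,
        (if π s = x then μ s * Real.log (μ s / (p x * μ s)) else 0)
        = (if π s = x then μ s * (-Real.log (p x)) else 0) := by
      intro s _
      by_cases h : π s = x
      · rw [if_pos h, if_pos h]
        congr 1
        rw [div_mul_eq_div_div_swap, div_self (hpos s).ne', Real.log_div one_ne_zero (hppos x).ne',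
          Real.log_one, zero_sub]
      · rw [if_neg h, if_neg h]
    rw [Finset.sum_congr rfl this, ← Finset.sum_filter, ← Finset.sum_mul]
    ring
  rw [hform]
  apply Finset.sum_pos
  · intro x _
    have : Real.log (p x) < 0 := Real.log_neg (hppos x) (hplt x)
    nlinarith [hppos x]
  · exact Finset.univ_nonempty

/-- Characterization of local information cascades: for the
threshold decision π = 1{Λ(S) ≥ τ}, a local information cascade occurs
(I(π; S | W=w) = 0 for both w) if and only if τ ∉ (L_s, U_s]. -/
theorem stmt_10 {S : Type*} [Fintype S] [Nonempty S]
    (μ₀ μ₁ : S → ℝ)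
    (hpos0 : ∀ s, 0 < μ₀ s) (hpos1 : ∀ s, 0 < μ₁ s)
    (hsum0 : ∑ s, μ₀ s = 1) (hsum1 : ∑ s, μ₁ s = 1)
    (Λ : S → ℝ) (hΛ : ∀ s, Λ s = Real.log (μ₁ s / μ₀ s))
    (Ls Us : ℝ)
    (hL : IsLeast (Set.range Λ) Ls) (hU : IsGreatest (Set.range Λ) Us)
    (τ : ℝ) (π : S → Fin 2) (hπ : ∀ s, π s = if τ ≤ Λ s then 1 else 0) :
    (detMI μ₀ π = 0 ∧ detMI μ₁ π = 0) ↔ τ ∉ Set.Ioc Ls Us := by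
  constructor
  · rintro ⟨h0, _⟩ ⟨hLτ, hτU⟩
    obtain ⟨s0, hs0⟩ := hL.1
    obtain ⟨s1, hs1⟩ := hU.1
    have hπ0 : π s0 = 0 := by rw [hπ]; rw [if_neg]; rw [hs0]; linarith
    have hπ1 : π s1 = 1 := by rw [hπ]; rw [if_pos]; rw [hs1]; exact hτU
    have : π s0 ≠ π s1 := by rw [hπ0, hπ1]; decide
    exact absurd h0 (ne_of_gt (detMI_pos μ₀ hpos0 hsum0 π s0 s1 this))
  · intro hτ
    have hτ' : τ ≤ Ls ∨ Us < τ := by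
      by_contra hc
      push_neg at hc
      exact hτ hc
    rcases hτ' with h | h
    · have hconst : ∀ s, π s = 1 := by
        intro s
        rw [hπ, if_pos (h.trans (hL.2 ⟨s, rfl⟩))]
      exact ⟨detMI_const μ₀ hpos0 hsum0 π 1 hconst,
        detMI_const μ₁ hpos1 hsum1 π 1 hconst⟩
    · have hconst : ∀ s, π s = 0 := by
        intro s
        rw [hπ, if_neg (not_le.mpr (lt_of_le_of_lt (hU.2 ⟨s, rfl⟩) h))]
      exact ⟨detMI_const μ₀ hpos0 hsum0 π 0 hconst,
        detMI_const μ₁ hpos1 hsum1 π 0 hconst⟩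
end

section
/- Under weak consistency, every local information cascade triggers a global information cascade: if for some n and g ∈ 𝒢_n with P_w(G_n = g) > 0 we have τ_n(g) ∉ (L_s, U_s], and if for every m ≥ n the decision π_m satisfies P_w(π_m = 0 | G_m = g_m, S_m = s) = 1{Λ(s) < τ_m(g_m)} with Λ(S_m) ∈ [L_s, U_s] almost surely and S_m conditionally independent of G_m given W, then I(π_m ; S_m | G_n = g, W = w) = 0 for all m ≥ n and both w ∈ {0,1}. -/
/-- Mutual information `I(π_m ; S_m)` under a product law: the signal `S_m` has
pmf `μS`, the social information `G_m` has (conditional) pmf `ν`, they are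
independent, and `π_m = π (S_m) (G_m)` is binary.  The joint pmf of
`(π_m, S_m)` is `P(x,s) = μS s · Σ_{g : π s g = x} ν g`, and
`I = Σ_{x,s} P(x,s) log(P(x,s)/(P(x)·P(s)))` with the `0·log 0 = 0`
convention. -/
noncomputable def condMI {S G : Type*} [Fintype S] [Fintype G]
    (μS : S → ℝ) (ν : G → ℝ) (π : S → G → Fin 2) : ℝ :=
  ∑ x : Fin 2, ∑ s : S,
    (if (μS s * ∑ g ∈ Finset.univ.filter (fun g => π s g = x), ν g) = 0 then 0
     else (μS s * ∑ g ∈ Finset.univ.filter (fun g => π s g = x), ν g) *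
       Real.log ((μS s * ∑ g ∈ Finset.univ.filter (fun g => π s g = x), ν g) /
         ((∑ s' : S, μS s' * ∑ g ∈ Finset.univ.filter (fun g => π s' g = x), ν g)
           * μS s)))


lemma condMI_eq_zero {S G : Type*} [Fintype S] [Fintype G]
    (μS : S → ℝ) (ν : G → ℝ)
    (hν : ∀ g, 0 ≤ ν g) (hνs : ∑ g, ν g = 1) (hμ : ∑ s, μS s = 1)
    (π : S → G → Fin 2) (c : Fin 2) (hc : ∀ s g, 0 < ν g → π s g = c) :
    condMI μS ν π = 0 := by
  have hzero : ∀ s g, π s g ≠ c → ν g = 0 := by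
    intro s g h
    by_contra hne
    exact h (hc s g (lt_of_le_of_ne (hν g) (Ne.symm hne)))
  have hfil : ∀ (s : S) (x : Fin 2),
      (∑ g ∈ Finset.univ.filter (fun g => π s g = x), ν g)
        = if x = c then 1 else 0 := by
    intro s x
    by_cases hx : x = c
    · subst hx
      simp only [if_pos rfl]
      rw [← hνs]
      apply Finset.sum_subset (Finset.filter_subset _ _)
      intro g _ hg
      simp only [Finset.mem_filter, Finset.mem_univ, true_and] at hg
      exact hzero _ _ hg
    · simp only [if_neg hx]
      apply Finset.sum_eq_zero
      intro g hg
      simp only [Finset.mem_filter, Finset.mem_univ, true_and] at hg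
      exact hzero _ _ (hg ▸ hx)
  unfold condMI
  apply Finset.sum_eq_zero
  intro x _
  apply Finset.sum_eq_zero
  intro s _
  by_cases hx : x = c
  · rcases eq_or_ne (μS s) 0 with hs | hs
    · simp [hfil, hx, hs]
    · simp [hfil, hx, hμ, hs, div_self hs]
  · simp [hfil, hx]

/-- Theorem 2: under weak consistency, every local information
cascade triggers a global information cascade.  If `τ_n(g) ∉ (L_s, U_s]` for a
social state `g` of positive probability, signals have bounded beliefs
(`Λ(S) ∈ [L_s, U_s]` a.s.), each decision is the threshold test
`π_m = 1{Λ(S_m) ≥ τ_m(G_m)}`, `S_m` is independent of `G_m` conditionally on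
`(G_n = g, W = w)` (so the conditional joint law is `μ_w ⊗ ν_m^w`), and the
conditional laws `ν_m^w` of `G_m` given `(G_n = g, W = w)` are weakly
consistent step by step, then `I(π_m ; S_m | G_n = g, W = w) = 0` for every
`m ≥ n` and both `w`. -/
theorem stmt_14 {S 𝒢 : Type*} [Fintype S] [Fintype 𝒢] [DecidableEq 𝒢]
    (μ : Fin 2 → S → ℝ)
    (hμpos : ∀ w s, 0 < μ w s) (hμsum : ∀ w, ∑ s, μ w s = 1)
    (Λ : S → ℝ) (Ls Us : ℝ) (hLU : Ls ≤ Us)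
    (hrange : ∀ s, Λ s ∈ Set.Icc Ls Us)
    (τ : ℕ → 𝒢 → ℝ)
    (n : ℕ) (g : 𝒢)
    -- ν m w = conditional pmf of G_m given (G_n = g, W = w), for m ≥ n
    (ν : ℕ → Fin 2 → 𝒢 → ℝ)
    (hνnn : ∀ m w g', 0 ≤ ν m w g')
    (hνsum : ∀ m, n ≤ m → ∀ w, ∑ g', ν m w g' = 1)
    -- conditioning on G_n = g: ν n w is the point mass at g
    (hbase : ∀ w g', ν n w g' = if g' = g then 1 else 0)
    -- weak consistency, conditionally on (G_n = g, W = w)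
    (hweakL : ∀ m, n ≤ m → ∀ w,
      (∀ g', 0 < ν m w g' → τ m g' ≤ Ls) →
      (∀ g', 0 < ν (m + 1) w g' → τ (m + 1) g' ≤ Ls))
    (hweakU : ∀ m, n ≤ m → ∀ w,
      (∀ g', 0 < ν m w g' → Us < τ m g') →
      (∀ g', 0 < ν (m + 1) w g' → Us < τ (m + 1) g'))
    -- local information cascade at node n
    (hτ : τ n g ∉ Set.Ioc Ls Us) :
    ∀ m, n ≤ m → ∀ w : Fin 2,
      condMI (μ w) (ν m w)
        (fun s g' => if τ m g' ≤ Λ s then 1 else 0) = 0 := by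
  intro m hm w
  have key : ∀ m, n ≤ m → ((∀ g', 0 < ν m w g' → τ m g' ≤ Ls) ∨
      (∀ g', 0 < ν m w g' → Us < τ m g')) := by
    intro m hm
    induction m, hm using Nat.le_induction with
    | base =>
      have hg : ∀ g', 0 < ν n w g' → g' = g := by
        intro g' h
        rw [hbase] at h
        by_contra hne
        simp [hne] at h
      rw [Set.mem_Ioc] at hτ
      rcases not_and_or.mp hτ with h | h
      · left; intro g' hg'; rw [hg g' hg']; exact le_of_not_gt h
      · right; intro g' hg'; rw [hg g' hg']; exact lt_of_not_ge h
    | succ k hk ih =>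
      rcases ih with h | h
      · exact Or.inl (hweakL k hk w h)
      · exact Or.inr (hweakU k hk w h)
  rcases key m hm with h | h
  · apply condMI_eq_zero (μ w) (ν m w) (hνnn m w) (hνsum m hm w) (hμsum w) _ 1
    intro s g' hg'
    have : τ m g' ≤ Λ s := le_trans (h g' hg') (hrange s).1
    simp [this]
  · apply condMI_eq_zero (μ w) (ν m w) (hνnn m w) (hνsum m hm w) (hμsum w) _ 0
    intro s g' hg'
    have : ¬ (τ m g' ≤ Λ s) := not_le.mpr (lt_of_le_of_lt (hrange s).2 (h g' hg'))
    simp [this]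
end
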